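/- For each t let F_t̄ denote survival functions evaluated at thresholds γ(t) < β(t) ≤ α_{k,l}(t). Assume F̄(β(t))/F̄(γ(t)) → g ∈ (0,1) and F̄(α_{k,l}(t))/F̄(β(t)) → a_{k,l} ∈ (0,1) as t → ∞, for all k, l. Then for each k ≥ 0 and l ≥ 0, P{N_+(ν) = k, N_-(ν) = l} → g(1−g)^k · ∏_{h=0}^{l−1}(1 − a_{k,h}) · a_{k,l}. -/

import Mathlib

/-!
Conditioning on the first shock gives a renewal equation for `p(k, l) = P{N₊(ν) = k, N₋(ν) = l}`.
A shock below `γ` restarts the process unchanged; a strengthening shock restarts it with `b`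
shifted by one; a weakening shock restarts it with `c` shifted by one and `γ` raised to `β`, since
no strengthening is possible after a weakening shock; a shock above `α₀ = α + b 0 - c 0` is fatal.
As the tail of an i.i.d. sequence is again i.i.d. and independent of its first term, this reads
`F̄(γ) p(k, l) = (F̄(γ) - F̄(β)) p'(k-1, l) + (F̄(β) - F̄(α₀)) p''(k, l-1) + F̄(α₀) [k = l = 0]`,
and induction on `k` and `l` gives the exact law. The limit then follows factor by factor from
`F̄(α_{k,l}) / F̄(γ) = (F̄(α_{k,l}) / F̄(β)) (F̄(β) / F̄(γ))`.
-/

open MeasureTheory ProbabilityTheory Filter Set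

/-- Numbers `(N₊(n), N₋(n))` of strengthening resp. weakening (harmful nonfatal) shocks
among the first `n` shocks `X 0, …, X (n-1)`. -/
noncomputable def shockCounts (γ β α : ℝ) (b c : ℕ → ℝ) (X : ℕ → ℝ) : ℕ → ℕ × ℕ
  | 0 => (0, 0)
  | n + 1 =>
      let p := shockCounts γ β α b c X n
      (if γ ≤ X n ∧ X n < β ∧ p.2 = 0 then p.1 + 1 else p.1,
       if β ≤ X n ∧ X n < α + b p.1 - c p.2 then p.2 + 1 else p.2)

/-- The `(i+1)`-th shock `X i` is fatal: it exceeds the current critical boundary. -/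
def fatalShock (γ β α : ℝ) (b c : ℕ → ℝ) (X : ℕ → ℝ) (i : ℕ) : Prop :=
  α + b (shockCounts γ β α b c X i).1 - c (shockCounts γ β α b c X i).2 ≤ X i

/-- 0-based index of the first fatal shock (junk value if there is none);
the paper's `ν` equals this plus one. -/
noncomputable def nuShock (γ β α : ℝ) (b c : ℕ → ℝ) (X : ℕ → ℝ) : ℕ :=
  sInf {i | fatalShock γ β α b c X i}

/-- Survival function `F̄(x) = P(X > x)` of a law `μ` on `ℝ`, as a real number. -/
noncomputable def survival (μ : Measure ℝ) (x : ℝ) : ℝ := (μ (Set.Ioi x)).toReal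

section SeqTail

variable {X : Type*} [MeasurableSpace X]

def seqTail (f : ℕ → X) : ℕ → X := fun i => f (i + 1)

lemma measurable_seqTail : Measurable (seqTail (X := X)) :=
  measurable_pi_lambda _ fun i => measurable_pi_apply (i + 1)

lemma ProbabilityTheory.iIndepFun.indepFun_eval_zero_seqTail {ν : Measure (ℕ → X)}
    (h : iIndepFun (fun i (f : ℕ → X) => f i) ν) : IndepFun (fun f => f 0) seqTail ν := by
  rw [IndepFun_iff_Indep]
  let m : ℕ → MeasurableSpace (ℕ → X) := fun i => MeasurableSpace.comap (fun f => f i) ‹_›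
  have hindep : Indep (⨆ i ∈ ({0} : Set ℕ), m i) (⨆ i ∈ {i : ℕ | 0 < i}, m i) ν :=
    indep_iSup_of_disjoint (fun i => (measurable_pi_apply i).comap_le) h.iIndep (by simp)
  refine indep_of_indep_of_le_right (indep_of_indep_of_le_left hindep ?_) ?_
  · exact le_iSup₂ (f := fun i (_ : i ∈ ({0} : Set ℕ)) => m i) 0 rfl
  · rw [MeasurableSpace.pi, MeasurableSpace.comap_iSup]
    refine iSup_le fun i => ?_
    rw [MeasurableSpace.comap_comp]
    exact le_iSup₂ (f := fun i (_ : i ∈ {i : ℕ | 0 < i}) => m i) (i + 1) i.succ_pos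

variable (μ : Measure X) [IsProbabilityMeasure μ]

lemma measurePreserving_seqTail : MeasurePreserving seqTail
    (Measure.infinitePi fun _ : ℕ => μ) (Measure.infinitePi fun _ : ℕ => μ) :=
  ⟨measurable_seqTail, Measure.map_infinitePi_infinitePi_of_inj (add_left_injective 1)⟩

lemma infinitePi_inter_eval_zero_mem_eq_mul {A : Set X} {E E' : Set (ℕ → X)}
    (hA : MeasurableSet A) (hE' : MeasurableSet E')
    (h : ∀ f : ℕ → X, f 0 ∈ A → (f ∈ E ↔ seqTail f ∈ E')) :
    Measure.infinitePi (fun _ : ℕ => μ) (E ∩ {f | f 0 ∈ A})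
      = μ A * Measure.infinitePi (fun _ : ℕ => μ) E' := by
  have hset : E ∩ {f | f 0 ∈ A} = (fun f : ℕ → X => f 0) ⁻¹' A ∩ seqTail ⁻¹' E' := by
    ext f
    simp only [mem_inter_iff, mem_ofPred_eq, mem_preimage]
    exact ⟨fun ⟨hf, h0⟩ => ⟨h0, (h f h0).1 hf⟩, fun ⟨h0, hf⟩ => ⟨(h f h0).2 hf, h0⟩⟩
  have hindep : IndepFun (fun f : ℕ → X => f 0) seqTail (Measure.infinitePi fun _ : ℕ => μ) :=
    (iIndepFun_infinitePi (X := fun _ (x : X) => x) fun _ => measurable_id)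
      |>.indepFun_eval_zero_seqTail
  rw [hset, hindep.measure_inter_preimage_eq_mul _ _ hA hE',
    (measurePreserving_eval_infinitePi _ 0).measure_preimage hA.nullMeasurableSet,
    (measurePreserving_seqTail μ).measure_preimage hE'.nullMeasurableSet]

end SeqTail

section Survival

lemma survival_antitone (μ : Measure ℝ) [IsFiniteMeasure μ] : Antitone (survival μ) :=
  fun _ _ hxy => measureReal_mono (Ioi_subset_Ioi hxy)

variable {μ : Measure ℝ} [NullSingletonClass μ]

lemma measureReal_Ici_eq_survival (x : ℝ) : μ.real (Ici x) = survival μ x :=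
  (measureReal_congr Ioi_ae_eq_Ici).symm

lemma measureReal_Ico_eq_survival_sub [IsFiniteMeasure μ] {x y : ℝ} (hxy : x ≤ y) :
    μ.real (Ico x y) = survival μ x - survival μ y := by
  rw [measureReal_congr Ico_ae_eq_Ioc, ← Ioi_sdiff_Ioi,
    measureReal_sdiff (Ioi_subset_Ioi hxy) measurableSet_Ioi]
  rfl

lemma measureReal_Iio_eq_one_sub_survival [IsProbabilityMeasure μ] (x : ℝ) :
    μ.real (Iio x) = 1 - survival μ x := by
  rw [← compl_Ici, probReal_compl_eq_one_sub measurableSet_Ici, measureReal_Ici_eq_survival]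

end Survival

section FirstShock

variable {Ω : Type*} [MeasurableSpace Ω] {ν : Measure Ω} [IsFiniteMeasure ν]

lemma measureReal_inter_preimage_union {φ : Ω → ℝ} (hφ : Measurable φ) {E : Set Ω}
    (hE : MeasurableSet E) {A B : Set ℝ} (hB : MeasurableSet B) (hAB : Disjoint A B) :
    ν.real (E ∩ φ ⁻¹' (A ∪ B)) = ν.real (E ∩ φ ⁻¹' A) + ν.real (E ∩ φ ⁻¹' B) := by
  rw [preimage_union, inter_union_distrib_left]
  exact measureReal_union ((hAB.preimage φ).mono inter_subset_right inter_subset_right)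
    (hE.inter (hφ hB))

variable (μ : Measure ℝ) [IsProbabilityMeasure μ] [NullSingletonClass μ]

theorem survival_mul_measureReal_eq_of_first_shock {x y z : ℝ} (hxy : x ≤ y) (hyz : y ≤ z)
    {E E₁ E₂ E₃ : Set (ℕ → ℝ)} (hE : MeasurableSet E) (hE₁ : MeasurableSet E₁)
    (hE₂ : MeasurableSet E₂) (hE₃ : MeasurableSet E₃)
    (h₀ : ∀ f : ℕ → ℝ, f 0 ∈ Iio x → (f ∈ E ↔ seqTail f ∈ E))
    (h₁ : ∀ f : ℕ → ℝ, f 0 ∈ Ico x y → (f ∈ E ↔ seqTail f ∈ E₁))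
    (h₂ : ∀ f : ℕ → ℝ, f 0 ∈ Ico y z → (f ∈ E ↔ seqTail f ∈ E₂))
    (h₃ : ∀ f : ℕ → ℝ, f 0 ∈ Ici z → (f ∈ E ↔ seqTail f ∈ E₃)) :
    survival μ x * (Measure.infinitePi fun _ : ℕ => μ).real E
      = (survival μ x - survival μ y) * (Measure.infinitePi fun _ : ℕ => μ).real E₁
        + (survival μ y - survival μ z) * (Measure.infinitePi fun _ : ℕ => μ).real E₂
        + survival μ z * (Measure.infinitePi fun _ : ℕ => μ).real E₃ := by
  set π := Measure.infinitePi fun _ : ℕ => μ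
  have piece : ∀ {A : Set ℝ} {E' : Set (ℕ → ℝ)}, MeasurableSet A → MeasurableSet E' →
      (∀ f : ℕ → ℝ, f 0 ∈ A → (f ∈ E ↔ seqTail f ∈ E')) →
      π.real (E ∩ (fun f => f 0) ⁻¹' A) = μ.real A * π.real E' := fun hA hE' h => by
    simp only [measureReal_def, ← ENNReal.toReal_mul]
    exact congrArg ENNReal.toReal (infinitePi_inter_eval_zero_mem_eq_mul μ hA hE' h)
  have split : ∀ {A B : Set ℝ}, MeasurableSet B → Disjoint A B →
      π.real (E ∩ (fun f => f 0) ⁻¹' (A ∪ B))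
        = π.real (E ∩ (fun f => f 0) ⁻¹' A) + π.real (E ∩ (fun f => f 0) ⁻¹' B) :=
    measureReal_inter_preimage_union (measurable_pi_apply 0) hE
  have hE_eq : π.real E = π.real (E ∩ (fun f => f 0) ⁻¹' (Iio x ∪ Ici x)) := by
    rw [Iio_union_Ici, preimage_univ, inter_univ]
  have hIco : ∀ {a b : ℝ}, Disjoint (Ico a b) (Ici b) := fun {a b} =>
    Set.disjoint_left.2 fun _ ha hb => (not_le.2 ha.2) hb
  rw [split measurableSet_Ici (Iio_disjoint_Ici le_rfl), ← Ico_union_Ici_eq_Ici hxy,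
    split measurableSet_Ici hIco, ← Ico_union_Ici_eq_Ici hyz, split measurableSet_Ici hIco,
    piece measurableSet_Iio hE h₀, piece measurableSet_Ico hE₁ h₁,
    piece measurableSet_Ico hE₂ h₂, piece measurableSet_Ici hE₃ h₃,
    measureReal_Iio_eq_one_sub_survival, measureReal_Ico_eq_survival_sub hxy,
    measureReal_Ico_eq_survival_sub hyz, measureReal_Ici_eq_survival] at hE_eq
  linear_combination hE_eq

end FirstShock

noncomputable def shockStep (γ β α : ℝ) (b c : ℕ → ℝ) (p : ℕ × ℕ) (x : ℝ) : ℕ × ℕ :=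
  (if γ ≤ x ∧ x < β ∧ p.2 = 0 then p.1 + 1 else p.1,
   if β ≤ x ∧ x < α + b p.1 - c p.2 then p.2 + 1 else p.2)

def failureEvent (γ β α : ℝ) (b c : ℕ → ℝ) (m : ℕ × ℕ) : Set (ℕ → ℝ) :=
  {f | (∃ i, fatalShock γ β α b c f i) ∧ shockCounts γ β α b c f (nuShock γ β α b c f) = m}

section Dynamics

variable {γ β α : ℝ} {b c : ℕ → ℝ} {f : ℕ → ℝ}

lemma shockCounts_succ (n : ℕ) :
    shockCounts γ β α b c f (n + 1) = shockStep γ β α b c (shockCounts γ β α b c f n) (f n) :=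
  rfl

lemma shockCounts_self_fst_eq_zero (n : ℕ) : (shockCounts β β α b c f n).1 = 0 := by
  induction n with
  | zero => rfl
  | succ n ih =>
    rw [shockCounts_succ, shockStep, if_neg fun h => (not_lt.2 h.1) h.2.1]
    exact ih

variable {γ' : ℝ} {d : ℕ × ℕ}

lemma shockCounts_succ_eq_add_seqTail (h₀ : shockStep γ β α b c 0 (f 0) = d)
    (hstep : ∀ p x, shockStep γ β α b c (p + d) x
      = shockStep γ' β α (fun j => b (j + d.1)) (fun h => c (h + d.2)) p x + d) (n : ℕ) :
    shockCounts γ β α b c f (n + 1)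
      = shockCounts γ' β α (fun j => b (j + d.1)) (fun h => c (h + d.2)) (seqTail f) n + d := by
  induction n with
  | zero => exact h₀.trans (zero_add d).symm
  | succ n ih => rw [shockCounts_succ, ih, hstep, shockCounts_succ]; rfl

lemma mem_failureEvent_iff_seqTail (h₀ : shockStep γ β α b c 0 (f 0) = d)
    (hstep : ∀ p x, shockStep γ β α b c (p + d) x
      = shockStep γ' β α (fun j => b (j + d.1)) (fun h => c (h + d.2)) p x + d)
    (hfat : ¬ fatalShock γ β α b c f 0) (m : ℕ × ℕ) :
    f ∈ failureEvent γ β α b c m ↔ ∃ m', m' + d = m ∧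
      seqTail f ∈ failureEvent γ' β α (fun j => b (j + d.1)) (fun h => c (h + d.2)) m' := by
  have hcounts := shockCounts_succ_eq_add_seqTail h₀ hstep
  have hfat_succ : ∀ n, fatalShock γ β α b c f (n + 1) ↔
      fatalShock γ' β α (fun j => b (j + d.1)) (fun h => c (h + d.2)) (seqTail f) n := by
    intro n
    simp only [fatalShock, hcounts n, Prod.fst_add, Prod.snd_add]
    rfl
  have hex : (∃ i, fatalShock γ β α b c f i) ↔
      ∃ n, fatalShock γ' β α (fun j => b (j + d.1)) (fun h => c (h + d.2)) (seqTail f) n := by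
    refine ⟨fun ⟨i, hi⟩ => ?_, fun ⟨n, hn⟩ => ⟨n + 1, (hfat_succ n).2 hn⟩⟩
    cases i with
    | zero => exact absurd hi hfat
    | succ n => exact ⟨n, (hfat_succ n).1 hi⟩
  have hnu : (∃ i, fatalShock γ β α b c f i) → nuShock γ β α b c f
      = nuShock γ' β α (fun j => b (j + d.1)) (fun h => c (h + d.2)) (seqTail f) + 1 := by
    rintro ⟨i, hi⟩
    have hpos : 1 ≤ nuShock γ β α b c f := by
      refine Nat.one_le_iff_ne_zero.2 fun h0 => hfat ?_
      have hmem : nuShock γ β α b c f ∈ {i | fatalShock γ β α b c f i} := Nat.sInf_mem ⟨i, hi⟩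
      rwa [h0] at hmem
    unfold nuShock at hpos ⊢
    rw [← Nat.sInf_add hpos]
    simp only [hfat_succ]
  constructor
  · rintro ⟨hf, hm⟩
    exact ⟨_, by rw [← hcounts, ← hnu hf, hm], hex.1 hf, rfl⟩
  · rintro ⟨m', rfl, hf, rfl⟩
    exact ⟨hex.2 hf, by rw [hnu (hex.2 hf), hcounts]⟩

end Dynamics

section Branches

variable {γ β α : ℝ} {b c : ℕ → ℝ} {f : ℕ → ℝ}

lemma mem_failureEvent_iff_of_lt (hγβ : γ ≤ β) (hβα : β ≤ α + b 0 - c 0) (hf : f 0 < γ)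
    (m : ℕ × ℕ) : f ∈ failureEvent γ β α b c m ↔ seqTail f ∈ failureEvent γ β α b c m := by
  rw [mem_failureEvent_iff_seqTail (γ' := γ) (d := 0) ?_ (by simp)
    (not_le.2 (hf.trans_le (hγβ.trans hβα)))]
  · simp
  · simp [shockStep, not_le.2 hf, not_le.2 (hf.trans_le hγβ)]

lemma mem_failureEvent_iff_of_strengthening (hγ : γ ≤ f 0) (hβ : f 0 < β)
    (hβα : β ≤ α + b 0 - c 0) (k l : ℕ) :
    f ∈ failureEvent γ β α b c (k, l) ↔
      0 < k ∧ seqTail f ∈ failureEvent γ β α (fun j => b (j + 1)) c (k - 1, l) := by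
  rw [mem_failureEvent_iff_seqTail (γ' := γ) (d := (1, 0)) ?_ ?_ (not_le.2 (hβ.trans_le hβα))]
  · constructor
    · rintro ⟨⟨k', l'⟩, hkl, hm⟩
      obtain ⟨rfl, rfl⟩ : k' + 1 = k ∧ l' = l := by simpa [Prod.ext_iff] using hkl
      exact ⟨k'.succ_pos, by simpa using hm⟩
    · rintro ⟨hk, hm⟩
      exact ⟨(k - 1, l), Prod.ext (Nat.sub_add_cancel hk) rfl, hm⟩
  · simp [shockStep, hγ, hβ, not_le.2 hβ]
  · rintro ⟨p₁, p₂⟩ x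
    simp only [shockStep, Prod.mk_add_mk, add_zero]
    split_ifs <;> rfl

lemma mem_failureEvent_iff_of_weakening (hβ : β ≤ f 0) (hf : f 0 < α + b 0 - c 0) (k l : ℕ) :
    f ∈ failureEvent γ β α b c (k, l) ↔
      0 < l ∧ seqTail f ∈ failureEvent β β α b (fun h => c (h + 1)) (k, l - 1) := by
  rw [mem_failureEvent_iff_seqTail (γ' := β) (d := (0, 1)) ?_ ?_ (not_le.2 hf)]
  · constructor
    · rintro ⟨⟨k', l'⟩, hkl, hm⟩
      obtain ⟨rfl, rfl⟩ : k' = k ∧ l' + 1 = l := by simpa [Prod.ext_iff] using hkl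
      exact ⟨l'.succ_pos, by simpa using hm⟩
    · rintro ⟨hl, hm⟩
      exact ⟨(k, l - 1), Prod.ext rfl (Nat.sub_add_cancel hl), hm⟩
  · simp [shockStep, hβ, hf, not_lt.2 hβ]
  · rintro ⟨p₁, p₂⟩ x
    have h₁ : ¬ (γ ≤ x ∧ x < β ∧ p₂ + 1 = 0) := fun h => p₂.succ_ne_zero h.2.2
    have h₂ : ¬ (β ≤ x ∧ x < β ∧ p₂ = 0) := fun h => (not_lt.2 h.1) h.2.1
    simp only [shockStep, Prod.mk_add_mk, add_zero, if_neg h₁, if_neg h₂]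
    split_ifs <;> rfl

lemma mem_failureEvent_iff_of_fatal (hf : α + b 0 - c 0 ≤ f 0) (m : ℕ × ℕ) :
    f ∈ failureEvent γ β α b c m ↔ m = 0 := by
  have hnu : nuShock γ β α b c f = 0 := Nat.sInf_eq_zero.2 (Or.inl hf)
  simp only [failureEvent, mem_ofPred_eq, hnu]
  exact ⟨fun h => h.2.symm, fun h => ⟨⟨0, hf⟩, h.symm⟩⟩

lemma failureEvent_self_eq_empty (k l : ℕ) : failureEvent β β α b c (k + 1, l) = ∅ :=
  eq_empty_of_forall_notMem fun f hf => by
    simpa [shockCounts_self_fst_eq_zero] using congrArg Prod.fst hf.2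

end Branches

section Measurability

variable (γ β α : ℝ) (b c : ℕ → ℝ)

lemma measurable_shockStep : Measurable fun q : (ℕ × ℕ) × ℝ => shockStep γ β α b c q.1 q.2 :=
  measurable_from_prod_countable_right fun p => by
    dsimp only [shockStep]
    exact .prodMk (.ite (by measurability) measurable_const measurable_const)
      (.ite (by measurability) measurable_const measurable_const)

lemma measurable_shockCounts (n : ℕ) : Measurable fun f => shockCounts γ β α b c f n := by
  induction n with
  | zero => exact measurable_const
  | succ n ih => exact (measurable_shockStep γ β α b c).comp (ih.prodMk (measurable_pi_apply n))

lemma measurableSet_fatalShock (i : ℕ) : MeasurableSet {f | fatalShock γ β α b c f i} :=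
  measurableSet_le ((measurable_of_countable fun p : ℕ × ℕ => α + b p.1 - c p.2).comp
    (measurable_shockCounts γ β α b c i)) (measurable_pi_apply i)

lemma failureEvent_eq_iUnion (m : ℕ × ℕ) : failureEvent γ β α b c m =
    ⋃ i, {f | fatalShock γ β α b c f i} ∩ (⋂ j < i, {f | fatalShock γ β α b c f j}ᶜ)
      ∩ {f | shockCounts γ β α b c f i = m} := by
  ext f
  simp only [failureEvent, mem_ofPred_eq, mem_iUnion, mem_inter_iff, mem_iInter, mem_compl_iff]
  constructor
  · rintro ⟨hex, hm⟩
    exact ⟨_, ⟨Nat.sInf_mem hex, fun j hj => Nat.notMem_of_lt_sInf hj⟩, hm⟩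
  · rintro ⟨i, ⟨hi, hmin⟩, hm⟩
    have hnu : nuShock γ β α b c f = i := le_antisymm (Nat.sInf_le hi) (not_lt.1 fun hlt =>
      hmin _ hlt (Nat.sInf_mem (s := {j | fatalShock γ β α b c f j}) ⟨i, hi⟩))
    exact ⟨⟨i, hi⟩, hnu ▸ hm⟩

lemma measurableSet_failureEvent (m : ℕ × ℕ) : MeasurableSet (failureEvent γ β α b c m) := by
  rw [failureEvent_eq_iUnion]
  exact .iUnion fun i => ((measurableSet_fatalShock γ β α b c i).inter
    (.iInter fun j => .iInter fun _ => (measurableSet_fatalShock γ β α b c j).compl)).inter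
    (measurable_shockCounts γ β α b c i (measurableSet_singleton m))

end Measurability

section ExactLaw

variable (μ : Measure ℝ) [IsProbabilityMeasure μ] [NullSingletonClass μ] {γ β α : ℝ}

theorem survival_mul_measureReal_failureEvent {b c : ℕ → ℝ} (hγβ : γ ≤ β)
    (hβα : β ≤ α + b 0 - c 0) (k l : ℕ) :
    survival μ γ * (Measure.infinitePi fun _ : ℕ => μ).real (failureEvent γ β α b c (k, l))
      = (survival μ γ - survival μ β) * (Measure.infinitePi fun _ : ℕ => μ).real
          {f | 0 < k ∧ f ∈ failureEvent γ β α (fun j => b (j + 1)) c (k - 1, l)}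
        + (survival μ β - survival μ (α + b 0 - c 0)) * (Measure.infinitePi fun _ : ℕ => μ).real
          {f | 0 < l ∧ f ∈ failureEvent β β α b (fun h => c (h + 1)) (k, l - 1)}
        + survival μ (α + b 0 - c 0) * (Measure.infinitePi fun _ : ℕ => μ).real
          {_f | k = 0 ∧ l = 0} :=
  survival_mul_measureReal_eq_of_first_shock μ hγβ hβα (measurableSet_failureEvent ..)
    (measurable_const.and (measurableSet_failureEvent ..).mem).setOf
    (measurable_const.and (measurableSet_failureEvent ..).mem).setOf (.const _)
    (fun _ hf => mem_failureEvent_iff_of_lt hγβ hβα hf _)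
    (fun _ hf => mem_failureEvent_iff_of_strengthening hf.1 hf.2 hβα k l)
    (fun _ hf => mem_failureEvent_iff_of_weakening hf.1 hf.2 k l)
    (fun _ hf => by simp [mem_failureEvent_iff_of_fatal hf, Prod.ext_iff])

theorem measureReal_failureEvent_zero_left {b c : ℕ → ℝ} (hγβ : γ ≤ β)
    (hβα : ∀ h, β ≤ α + b 0 - c h) (hβ : 0 < survival μ β) (l : ℕ) :
    (Measure.infinitePi fun _ : ℕ => μ).real (failureEvent γ β α b c (0, l))
      = (∏ h ∈ Finset.range l, (1 - survival μ (α + b 0 - c h) / survival μ β))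
        * (survival μ (α + b 0 - c l) / survival μ γ) := by
  have hγ : 0 < survival μ γ := hβ.trans_le (survival_antitone μ hγβ)
  induction l generalizing γ c with
  | zero =>
    have key := survival_mul_measureReal_failureEvent μ hγβ (hβα 0) 0 0
    simp only [lt_self_iff_false, false_and, ofPred_false, measureReal_empty, and_self,
      ofPred_true, probReal_univ] at key
    field_simp
    linear_combination key
  | succ l ih =>
    have key := survival_mul_measureReal_failureEvent μ hγβ (hβα 0) 0 (l + 1)
    simp only [lt_self_iff_false, false_and, ofPred_false, measureReal_empty, l.succ_pos,
      true_and, add_tsub_cancel_right, ofPred_mem_eq, l.succ_ne_zero, and_false] at key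
    rw [ih le_rfl (fun h => hβα (h + 1)) hβ] at key
    rw [← mul_right_inj' hγ.ne', key, Finset.prod_range_succ']
    generalize ∏ h ∈ Finset.range l, (1 - survival μ (α + b 0 - c (h + 1)) / survival μ β) = Q
    field_simp
    ring

theorem measureReal_failureEvent {b c : ℕ → ℝ} (hγβ : γ ≤ β)
    (hβα : ∀ j h, β ≤ α + b j - c h) (hβ : 0 < survival μ β) (k l : ℕ) :
    (Measure.infinitePi fun _ : ℕ => μ).real (failureEvent γ β α b c (k, l))
      = (1 - survival μ β / survival μ γ) ^ k
        * (∏ h ∈ Finset.range l, (1 - survival μ (α + b k - c h) / survival μ β))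
        * (survival μ (α + b k - c l) / survival μ γ) := by
  have hγ : 0 < survival μ γ := hβ.trans_le (survival_antitone μ hγβ)
  induction k generalizing b with
  | zero => simpa using measureReal_failureEvent_zero_left μ hγβ (hβα 0) hβ l
  | succ k ih =>
    have key := survival_mul_measureReal_failureEvent μ hγβ (hβα 0 0) (k + 1) l
    simp only [k.succ_pos, true_and, add_tsub_cancel_right, ofPred_mem_eq,
      failureEvent_self_eq_empty, mem_empty_iff_false, and_false, ofPred_false, measureReal_empty,
      k.succ_ne_zero, false_and] at key
    rw [ih fun j h => hβα (j + 1) h] at key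
    have hγβ' : survival μ γ - survival μ β
        = survival μ γ * (1 - survival μ β / survival μ γ) := by field_simp
    rw [← mul_right_inj' hγ.ne', key, hγβ']
    generalize 1 - survival μ β / survival μ γ = r
    field_simp
    ring

end ExactLaw

theorem shock_joint_asymptotic_general
    {Ω : Type*} [MeasurableSpace Ω] (P : Measure Ω) [IsProbabilityMeasure P]
    (μ : Measure ℝ) [IsProbabilityMeasure μ]
    (X : ℕ → Ω → ℝ)
    (hindep : iIndepFun X P)
    (hdist : ∀ i, Measure.map (X i) P = μ)
    (hcont : ∀ x : ℝ, μ {x} = 0)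
    (γ β α : ℝ → ℝ) (b c : ℝ → ℕ → ℝ)
    (hγβ : ∀ t, γ t < β t)
    (hβα : ∀ t, ∀ k l : ℕ, β t ≤ α t + b t k - c t l)
    (g : ℝ) (hg : g ∈ Set.Ioo (0 : ℝ) 1)
    (hgt : Tendsto (fun t => survival μ (β t) / survival μ (γ t)) atTop (nhds g))
    (a : ℕ → ℕ → ℝ)
    (hat : ∀ k l : ℕ, Tendsto
      (fun t => survival μ (α t + b t k - c t l) / survival μ (β t)) atTop (nhds (a k l)))
    (k l : ℕ) :
    Tendsto (fun t =>
        (P {ω | (∃ i, fatalShock (γ t) (β t) (α t) (b t) (c t) (fun j => X j ω) i) ∧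
          (shockCounts (γ t) (β t) (α t) (b t) (c t) (fun j => X j ω)
            (nuShock (γ t) (β t) (α t) (b t) (c t) (fun j => X j ω))) = (k, l)}).toReal)
      atTop
      (nhds (g * (1 - g) ^ k * (∏ h ∈ Finset.range l, (1 - a k h)) * a k l)) := by
  have : NullSingletonClass μ := ⟨hcont⟩
  have hX : AEMeasurable (fun ω i => X i ω) P := aemeasurable_pi_iff.2 fun i =>
    .of_map_ne_zero (by rw [hdist]; exact IsProbabilityMeasure.ne_zero μ)
  have hlaw : P.map (fun ω i => X i ω) = Measure.infinitePi fun _ : ℕ => μ := by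
    simpa [hdist] using hindep.map_fun_eq_infinitePi_map₀ hX
  have hβ : ∀ᶠ t in atTop, 0 < survival μ (β t) := by
    filter_upwards [hgt.eventually (lt_mem_nhds hg.1)] with t ht
    exact ((div_pos_iff.1 ht).resolve_right fun h => (not_lt.2 measureReal_nonneg) h.1).1
  have hlim := ((((tendsto_const_nhds (x := 1)).sub hgt).pow k).mul
    (tendsto_finsetProd (Finset.range l) fun h _ =>
      (tendsto_const_nhds (x := 1)).sub (hat k h))).mul ((hat k l).mul hgt)
  rw [show g * (1 - g) ^ k * (∏ h ∈ Finset.range l, (1 - a k h)) * a k l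
    = (1 - g) ^ k * (∏ h ∈ Finset.range l, (1 - a k h)) * (a k l * g) by ring]
  refine hlim.congr' ?_
  filter_upwards [hβ] with t ht
  rw [div_mul_div_cancel₀ ht.ne', ← measureReal_failureEvent μ (hγβ t).le (hβα t) ht, ← hlaw,
    measureReal_def, Measure.map_apply_of_aemeasurable hX (measurableSet_failureEvent ..)]
  rfl

/-- asymptotic joint distribution of `(N₊(ν), N₋(ν))`:
if `F̄(β(t))/F̄(γ(t)) → g ∈ (0,1)` and `F̄(α_{k,l}(t))/F̄(β(t)) → a_{k,l} ∈ (0,1)`, then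
`P{N₊(ν)=k, N₋(ν)=l} → g (1-g)^k ∏_{h<l} (1-a_{k,h}) ⬝ a_{k,l}` as `t → ∞`. -/
theorem shock_joint_asymptotic
    {Ω : Type*} [MeasurableSpace Ω] (P : Measure Ω) [IsProbabilityMeasure P]
    (μ : Measure ℝ) [IsProbabilityMeasure μ]
    (X : ℕ → Ω → ℝ)
    (hindep : iIndepFun X P)
    (hdist : ∀ i, Measure.map (X i) P = μ)
    (hcont : ∀ x : ℝ, μ {x} = 0)
    (γ β α : ℝ → ℝ) (b c : ℝ → ℕ → ℝ)
    (hγβ : ∀ t, γ t < β t)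
    (hb : ∀ t, Monotone (b t)) (hc : ∀ t, Monotone (c t))
    (hb0 : ∀ t, b t 0 = 0) (hc0 : ∀ t, c t 0 = 0)
    (hβα : ∀ t, ∀ k l : ℕ, β t ≤ α t + b t k - c t l)
    (hγpos : ∀ t, 0 < survival μ (γ t))
    (hβ0 : Tendsto (fun t => survival μ (β t)) atTop (nhds 0))
    (g : ℝ) (hg : g ∈ Set.Ioo (0 : ℝ) 1)
    (hgt : Tendsto (fun t => survival μ (β t) / survival μ (γ t)) atTop (nhds g))
    (a : ℕ → ℕ → ℝ) (ha : ∀ k l, a k l ∈ Set.Ioo (0 : ℝ) 1)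
    (hat : ∀ k l : ℕ, Tendsto
      (fun t => survival μ (α t + b t k - c t l) / survival μ (β t)) atTop (nhds (a k l)))
    (k l : ℕ) :
    Tendsto (fun t =>
        (P {ω | (∃ i, fatalShock (γ t) (β t) (α t) (b t) (c t) (fun j => X j ω) i) ∧
          (shockCounts (γ t) (β t) (α t) (b t) (c t) (fun j => X j ω)
            (nuShock (γ t) (β t) (α t) (b t) (c t) (fun j => X j ω))) = (k, l)}).toReal)
      atTop
      (nhds (g * (1 - g) ^ k * (∏ h ∈ Finset.range l, (1 - a k h)) * a k l)) :=
  shock_joint_asymptotic_general P μ X hindep hdist hcont γ β α b c hγβ hβα g hg hgt a hat k l
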